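/- arXiv:1105.4463 — 5 statements merged into one kernel-verified Lean document; each statement's English description precedes it below -/
import Mathlib

section
/- Let X be a regular Hausdorff (T3) topological space and κ an infinite cardinal. Assume that the intersection of any family of fewer than κ open sets is open (X is κ-additive), and that every open cover of X has a subcover of cardinality at most κ. Then X is normal (T4). -/
open Cardinal Set

-- auxiliary: enumerate a small set by κ.ord.toType
lemma enum_aux {Y : Type*} (κ : Cardinal) (S : Set Y) (y0 : Y) (hS : #S ≤ κ) :
    ∃ f : κ.ord.ToType → Y, S ⊆ Set.range f ∧ ∀ α, f α = y0 ∨ f α ∈ S := by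
  have h : #S ≤ #κ.ord.ToType := by rwa [Cardinal.mk_ord_toType]
  obtain ⟨e⟩ := h
  classical
  refine ⟨fun α => if h : ∃ s : S, e s = α then (h.choose : Y) else y0, ?_, ?_⟩
  · rintro y hy
    refine ⟨e ⟨y, hy⟩, ?_⟩
    have h : ∃ s : S, e s = e ⟨y, hy⟩ := ⟨⟨y, hy⟩, rfl⟩
    simp only [dif_pos h]
    have := h.choose_spec
    have := e.injective this
    rw [this]
  · intro α
    by_cases h : ∃ s : S, e s = α
    · right; simp only [dif_pos h]; exact (h.choose).2
    · left; simp only [dif_neg h]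

lemma regular_aux {X : Type*} [TopologicalSpace X] [RegularSpace X] {x : X} {B : Set X}
    (hB : IsClosed B) (hx : x ∉ B) : ∃ U : Set X, IsOpen U ∧ x ∈ U ∧ closure U ⊆ Bᶜ := by
  have hBc : Bᶜ ∈ nhds x := hB.isOpen_compl.mem_nhds hx
  obtain ⟨V, hV, hVc, hVB⟩ := exists_mem_nhds_isClosed_subset hBc
  exact ⟨interior V, isOpen_interior, mem_interior_iff_mem_nhds.2 hV,
    (closure_minimal interior_subset hVc).trans hVB⟩

/-- A T3 (regular + T1) space which is `κ`-additive (intersections of fewer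
than `κ` open sets are open) and in which every open cover has a subcover of cardinality
at most `κ` is normal. -/
theorem stmt3 {X : Type*} [TopologicalSpace X] [T1Space X] [RegularSpace X]
    (κ : Cardinal) (hκ : Cardinal.aleph0 ≤ κ)
    (hadd : ∀ S : Set (Set X), #S < κ → (∀ U ∈ S, IsOpen U) → IsOpen (⋂₀ S))
    (hcov : ∀ C : Set (Set X), (∀ U ∈ C, IsOpen U) → ⋃₀ C = Set.univ →
      ∃ C' ⊆ C, #C' ≤ κ ∧ ⋃₀ C' = Set.univ) :
    NormalSpace X := by
  constructor
  intro A B hA hB hAB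
  classical
  set C : Set (Set X) := {U | IsOpen U ∧ (closure U ⊆ Aᶜ ∨ closure U ⊆ Bᶜ)} with hC
  have hCcov : ⋃₀ C = Set.univ := by
    ext x
    simp only [Set.mem_sUnion, Set.mem_univ, iff_true]
    by_cases hx : x ∈ A
    · have hxB : x ∉ B := fun h => hAB.ne_of_mem hx h rfl
      obtain ⟨U, hUo, hxU, hUB⟩ := regular_aux hB hxB
      exact ⟨U, ⟨hUo, Or.inr hUB⟩, hxU⟩
    · obtain ⟨U, hUo, hxU, hUA⟩ := regular_aux hA hx
      exact ⟨U, ⟨hUo, Or.inl hUA⟩, hxU⟩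
  obtain ⟨C', hC'sub, hC'card, hC'cov⟩ := hcov C (fun U hU => hU.1) hCcov
  set CA : Set (Set X) := {U ∈ C' | closure U ⊆ Bᶜ} with hCA
  set CB : Set (Set X) := {U ∈ C' | closure U ⊆ Aᶜ} with hCB
  have hACA : A ⊆ ⋃₀ CA := by
    intro x hx
    have : x ∈ ⋃₀ C' := by rw [hC'cov]; trivial
    obtain ⟨U, hU, hxU⟩ := this
    rcases (hC'sub hU).2 with h | h
    · exact absurd hx (h (subset_closure hxU))
    · exact ⟨U, ⟨hU, h⟩, hxU⟩
  have hBCB : B ⊆ ⋃₀ CB := by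
    intro x hx
    have : x ∈ ⋃₀ C' := by rw [hC'cov]; trivial
    obtain ⟨U, hU, hxU⟩ := this
    rcases (hC'sub hU).2 with h | h
    · exact ⟨U, ⟨hU, h⟩, hxU⟩
    · exact absurd hx (h (subset_closure hxU))
  obtain ⟨f, hfcov, hfmem⟩ := enum_aux κ CA ∅
    (le_trans (Cardinal.mk_le_mk_of_subset (fun U hU => hU.1)) hC'card)
  obtain ⟨g, hgcov, hgmem⟩ := enum_aux κ CB ∅
    (le_trans (Cardinal.mk_le_mk_of_subset (fun U hU => hU.1)) hC'card)
  -- closures properties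
  have hfopen : ∀ α, IsOpen (f α) := by
    intro α; rcases hfmem α with h | h
    · rw [h]; exact isOpen_empty
    · exact (hC'sub h.1).1
  have hgopen : ∀ α, IsOpen (g α) := by
    intro α; rcases hgmem α with h | h
    · rw [h]; exact isOpen_empty
    · exact (hC'sub h.1).1
  have hfcl : ∀ α, closure (f α) ⊆ Bᶜ := by
    intro α; rcases hfmem α with h | h
    · rw [h, closure_empty]; exact Set.empty_subset _
    · exact h.2
  have hgcl : ∀ α, closure (g α) ⊆ Aᶜ := by
    intro α; rcases hgmem α with h | h
    · rw [h, closure_empty]; exact Set.empty_subset _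
    · exact h.2
  -- small Iic
  have hIic : ∀ α : κ.ord.ToType, #(Set.Iic α) < κ := by
    intro α
    rw [← Set.Iio_union_right]
    apply lt_of_le_of_lt (Cardinal.mk_union_le _ _)
    refine Cardinal.add_lt_of_lt hκ (Cardinal.mk_Iio_ord_toType α) ?_
    rw [Cardinal.mk_singleton]
    exact lt_of_lt_of_le Cardinal.one_lt_aleph0 hκ
  -- closed unions of closures
  have key : ∀ h : κ.ord.ToType → Set X, ∀ α, IsClosed (⋃ β ∈ Set.Iic α, closure (h β)) := by
    intro h α
    rw [← isOpen_compl_iff]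
    have : (⋃ β ∈ Set.Iic α, closure (h β))ᶜ =
        ⋂₀ ((fun β => (closure (h β))ᶜ) '' Set.Iic α) := by
      rw [Set.compl_iUnion₂]
      ext x
      simp [Set.mem_sInter]
    rw [this]
    apply hadd
    · exact lt_of_le_of_lt (Cardinal.mk_image_le) (hIic α)
    · rintro U ⟨β, _, rfl⟩
      exact isClosed_closure.isOpen_compl
  set u : κ.ord.ToType → Set X := fun α => f α \ ⋃ β ∈ Set.Iic α, closure (g β) with hu
  set v : κ.ord.ToType → Set X := fun α => g α \ ⋃ β ∈ Set.Iic α, closure (f β) with hv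
  refine ⟨⋃ α, u α, ⋃ α, v α, ?_, ?_, ?_, ?_, ?_⟩
  · exact isOpen_iUnion fun α => (hfopen α).sdiff (key g α)
  · exact isOpen_iUnion fun α => (hgopen α).sdiff (key f α)
  · intro x hx
    obtain ⟨U, hU, hxU⟩ := hACA hx
    obtain ⟨α, rfl⟩ := hfcov hU
    refine Set.mem_iUnion.2 ⟨α, hxU, ?_⟩
    simp only [Set.mem_iUnion]
    rintro ⟨β, _, hxcl⟩
    exact hgcl β hxcl hx
  · intro x hx
    obtain ⟨U, hU, hxU⟩ := hBCB hx
    obtain ⟨α, rfl⟩ := hgcov hU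
    refine Set.mem_iUnion.2 ⟨α, hxU, ?_⟩
    simp only [Set.mem_iUnion]
    rintro ⟨β, _, hxcl⟩
    exact hfcl β hxcl hx
  · rw [Set.disjoint_iUnion_left]
    intro α
    rw [Set.disjoint_iUnion_right]
    intro β
    rw [Set.disjoint_left]
    rintro x ⟨hxf, hxD⟩ ⟨hxg, hxE⟩
    rcases le_total α β with h | h
    · exact hxE (Set.mem_biUnion h (subset_closure hxf))
    · exact hxD (Set.mem_biUnion h (subset_closure hxg))
end

section
/- Let X be a normal topological space in which countable intersections of open sets are open (ω1-additive). Then X is zero-dimensional: disjoint closed sets can be separated by clopen sets, and in particular if X is also T1 and regular, X has a basis of clopen sets. -/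
/-- In a normal space, disjoint closed sets E, F admit an open V with E ⊆ V and
closure V disjoint from F. -/
lemma stmt7_aux {X : Type*} [TopologicalSpace X] [NormalSpace X]
    {E F : Set X} (hE : IsClosed E) (hF : IsClosed F) (hEF : Disjoint E F) :
    ∃ V : Set X, IsOpen V ∧ E ⊆ V ∧ Disjoint (closure V) F := by
  obtain ⟨U, V, hU, hV, hEU, hFV, hUV⟩ := NormalSpace.normal E F hE hF hEF
  refine ⟨U, hU, hEU, ?_⟩
  have h1 : closure U ⊆ Vᶜ := by
    rw [← hV.isClosed_compl.closure_eq]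
    exact closure_mono (Set.disjoint_left.mp hUV)
  exact Set.disjoint_left.mpr fun x hx hxF => h1 hx (hFV hxF)

lemma stmt7_sep {X : Type*} [TopologicalSpace X] [NormalSpace X]
    (hadd : ∀ U : ℕ → Set X, (∀ n, IsOpen (U n)) → IsOpen (⋂ n, U n))
    (E F : Set X) (hE : IsClosed E) (hF : IsClosed F) (hEF : Disjoint E F) :
    ∃ K : Set X, IsClopen K ∧ E ⊆ K ∧ Disjoint K F := by
  obtain ⟨V0, hV0, hEV0, hV0F⟩ := stmt7_aux hE hF hEF
  -- the subtype of "good" open sets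
  let T := {W : Set X // IsOpen W ∧ Disjoint (closure W) F}
  have step : ∀ t : T, ∃ t' : T, closure t.1 ⊆ t'.1 := by
    rintro ⟨W, hW, hWF⟩
    obtain ⟨W', h1, h2, h3⟩ := stmt7_aux isClosed_closure hF hWF
    exact ⟨⟨W', h1, h3⟩, h2⟩
  choose nxt hnxt using step
  let g : ℕ → T := fun n => Nat.rec ⟨V0, hV0, hV0F⟩ (fun _ t => nxt t) n
  have hg : ∀ n, closure (g n).1 ⊆ (g (n + 1)).1 := fun n => hnxt (g n)
  refine ⟨⋃ n, (g n).1, ⟨?_, isOpen_iUnion fun n => (g n).2.1⟩, ?_, ?_⟩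
  · -- closed: complement is ⋂ (closure (g n))ᶜ
    have key : (⋃ n, (g n).1) = ⋃ n, closure (g n).1 := by
      apply Set.Subset.antisymm
      · exact Set.iUnion_mono fun n => subset_closure
      · exact Set.iUnion_subset fun n => (hg n).trans (Set.subset_iUnion (fun n => (g n).1) (n + 1))
    rw [key, ← isOpen_compl_iff, Set.compl_iUnion]
    exact hadd _ fun n => isClosed_closure.isOpen_compl
  · exact hEV0.trans (Set.subset_iUnion (fun n => (g n).1) 0)
  · refine Set.disjoint_left.mpr ?_
    rintro x hx hxF
    obtain ⟨n, hn⟩ := Set.mem_iUnion.mp hx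
    exact Set.disjoint_left.mp (g n).2.2 (subset_closure hn) hxF

/-- In a normal space in which countable intersections of open sets are open
(ω₁-additivity), disjoint closed sets can be separated by clopen sets; in particular,
if the space is moreover T1 and regular, it has a basis of clopen sets
(zero-dimensionality). -/
theorem stmt7 {X : Type*} [TopologicalSpace X] [NormalSpace X]
    (hadd : ∀ U : ℕ → Set X, (∀ n, IsOpen (U n)) → IsOpen (⋂ n, U n)) :
    (∀ E F : Set X, IsClosed E → IsClosed F → Disjoint E F →
      ∃ K : Set X, IsClopen K ∧ E ⊆ K ∧ Disjoint K F) ∧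
    (T1Space X → RegularSpace X →
      ∃ B : Set (Set X), TopologicalSpace.IsTopologicalBasis B ∧ ∀ b ∈ B, IsClopen b) := by
  refine ⟨stmt7_sep hadd, fun hT1 _ => ⟨{K | IsClopen K}, ?_, fun b hb => hb⟩⟩
  refine TopologicalSpace.isTopologicalBasis_of_isOpen_of_nhds (fun u hu => hu.2) ?_
  intro x U hxU hU
  obtain ⟨K, hK, hxK, hKF⟩ := stmt7_sep hadd {x} Uᶜ (isClosed_singleton)
    hU.isClosed_compl (Set.disjoint_left.mpr (by rintro y rfl; exact fun h => h hxU))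
  exact ⟨K, hK, hxK rfl, fun y hy => by
    by_contra h; exact Set.disjoint_left.mp hKF hy h⟩
end

section
/- Let α be a well-ordered index set, let (X, d) be a metric space over the lexicographically ordered group ℝ^α (componentwise addition, lexicographic order). For distinct x, y ∈ X let n(x,y) be the least λ ∈ α with d(x,y)_λ ≠ 0. Define δ(x,x) = 0 and δ(x,y) = r^{n(x,y)} for x ≠ y, where r^λ ∈ ℤ^α is the indicator of {λ}. Then δ is a metric over ℤ^α satisfying the strong (ultrametric-type) inequality δ(x,y) ≤ max(δ(x,z), δ(z,y)) for all x, y, z. -/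
/-! If the leading index of `d x y` came strictly after those of `d x z` and `d z y`, the sum
`d x z + d z y` would vanish up to and including that index, while `d x y` is positive there,
contradicting the triangle inequality. Hence `min (n x z) (n z y) ≤ n x y`; as `l ↦ r^l` is
strictly antitone this is the strong inequality for `δ`, which in turn gives the triangle
inequality. -/

/-- A metric on `X` with values in a linearly ordered abelian group `G`. -/
structure IsGMetric {X G : Type*} [AddCommGroup G] [LinearOrder G] [IsOrderedAddMonoid G] (d : X → X → G) : Prop where
  nonneg : ∀ x y, 0 ≤ d x y
  eq_zero_iff : ∀ x y, d x y = 0 ↔ x = y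
  symm : ∀ x y, d x y = d y x
  triangle : ∀ x y z, d x y ≤ d x z + d z y

/-- The element `r^l` of `Lex (ι → R)`: indicator of the coordinate `l`. -/
def unitVec {ι R : Type*} [DecidableEq ι] [Zero R] [One R] (l : ι) : Lex (ι → R) :=
  toLex fun m => if m = l then 1 else 0

def IsLeadingIndex {α R : Type*} [LT α] [Zero R] (f : Lex (α → R)) (l : α) : Prop :=
  ofLex f l ≠ 0 ∧ ∀ m < l, ofLex f m = 0

namespace IsLeadingIndex

variable {α R : Type*} [LinearOrder α] {f g h : Lex (α → R)} {a b l : α}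

theorem unique [Zero R] (ha : IsLeadingIndex f a) (hb : IsLeadingIndex f b) : a = b := by
  rcases lt_trichotomy a b with hab | rfl | hab
  · exact absurd (hb.2 a hab) ha.1
  · rfl
  · exact absurd (ha.2 b hab) hb.1

theorem min_le_of_le_add [AddMonoid R] [LinearOrder R] (h₀ : 0 ≤ h) (hl : IsLeadingIndex h l)
    (ha : IsLeadingIndex f a) (hb : IsLeadingIndex g b) (hle : h ≤ f + g) : min a b ≤ l := by
  by_contra! hlt
  rw [lt_min_iff] at hlt
  have hsum : ∀ m ≤ l, ofLex (f + g) m = 0 := fun m hm => by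
    rw [ofLex_add, Pi.add_apply, ha.2 m (hm.trans_lt hlt.1), hb.2 m (hm.trans_lt hlt.2), add_zero]
  have hnonneg : 0 ≤ ofLex h l := Pi.apply_le_of_toLex h₀ fun m hm => (hl.2 m hm).symm
  have hnonpos : ofLex h l ≤ 0 := hsum l le_rfl ▸
    Pi.apply_le_of_toLex hle fun m hm => (hl.2 m hm).trans (hsum m hm.le).symm
  exact hl.1 (hnonpos.antisymm hnonneg)

end IsLeadingIndex

section unitVec

variable {α R : Type*} [LinearOrder α] [DecidableEq α] [Zero R] [One R] [PartialOrder R]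
  [ZeroLEOneClass R] [NeZero (1 : R)]

theorem unitVec_pos (l : α) : (0 : Lex (α → R)) < unitVec l :=
  ⟨l, fun _ hm => (if_neg hm.ne).symm, by
    show (0 : R) < if l = l then 1 else 0
    simp⟩

theorem unitVec_strictAnti : StrictAnti (unitVec : α → Lex (α → R)) := fun m l h =>
  ⟨m, fun _ hj => (if_neg (hj.trans h).ne).trans (if_neg hj.ne).symm, by
    show (if m = l then (1 : R) else 0) < if m = m then 1 else 0
    simp [h.ne]⟩

end unitVec

theorem IsGMetric.min_le_of_isLeadingIndex {α R X : Type*} [LinearOrder α] [WellFoundedLT α]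
    [AddCommGroup R] [LinearOrder R] [IsOrderedAddMonoid R] {d : X → X → Lex (α → R)}
    (hd : IsGMetric d) {n : X → X → α}
    (hn : ∀ x y, x ≠ y → IsLeadingIndex (d x y) (n x y)) {x y z : X}
    (hxy : x ≠ y) (hxz : x ≠ z) (hzy : z ≠ y) : min (n x z) (n z y) ≤ n x y :=
  (hn x y hxy).min_le_of_le_add (hd.nonneg x y) (hn x z hxz) (hn z y hzy) (hd.triangle x y z)

/-- Given a metric `d` over lexicographically ordered `ℝ^α` (`α` well-ordered),
with `n x y` the least coordinate where `d x y` is nonzero (for `x ≠ y`), the function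
`δ` with `δ x x = 0` and `δ x y = r^{n x y}` for `x ≠ y` is a metric over `ℤ^α`
satisfying the strong inequality `δ x y ≤ max (δ x z) (δ z y)`. -/
theorem stmt9 {α X : Type*} [LinearOrder α] [WellFoundedLT α]
    (d : X → X → Lex (α → ℝ)) (hd : IsGMetric d)
    (n : X → X → α)
    (hn : ∀ x y, x ≠ y →
      ofLex (d x y) (n x y) ≠ 0 ∧ ∀ m, m < n x y → ofLex (d x y) m = 0)
    (δ : X → X → Lex (α → ℤ)) (hδ0 : ∀ x, δ x x = 0)
    (hδ : ∀ x y, x ≠ y → δ x y = unitVec (n x y)) :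
    IsGMetric δ ∧ ∀ x y z, δ x y ≤ max (δ x z) (δ z y) := by
  have hnonneg : ∀ x y, 0 ≤ δ x y := fun x y => by
    obtain rfl | hxy := eq_or_ne x y
    · exact (hδ0 x).ge
    · exact hδ x y hxy ▸ (unitVec_pos _).le
  have hstrong : ∀ x y z, δ x y ≤ max (δ x z) (δ z y) := by
    intro x y z
    obtain rfl | hxy := eq_or_ne x y
    · exact hδ0 x ▸ (hnonneg x z).trans (le_max_left _ _)
    obtain rfl | hxz := eq_or_ne x z
    · exact le_max_right _ _
    obtain rfl | hzy := eq_or_ne z y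
    · exact le_max_left _ _
    rw [hδ x y hxy, hδ x z hxz, hδ z y hzy, ← unitVec_strictAnti.antitone.map_min]
    exact unitVec_strictAnti.antitone (hd.min_le_of_isLeadingIndex hn hxy hxz hzy)
  refine ⟨⟨hnonneg, fun x y => ⟨fun h => ?_, fun h => h ▸ hδ0 x⟩, fun x y => ?_, fun x y z =>
    (hstrong x y z).trans (max_le_add_of_nonneg (hnonneg x z) (hnonneg z y))⟩, hstrong⟩
  · by_contra hxy
    exact (unitVec_pos (n x y)).ne' ((hδ x y hxy).symm.trans h)
  · obtain rfl | hxy := eq_or_ne x y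
    · rfl
    · rw [hδ x y hxy, hδ y x hxy.symm,
        IsLeadingIndex.unique (hn x y hxy) (hd.symm x y ▸ hn y x hxy.symm)]
end

section
/- Let ω_μ be an infinite regular ordinal and (X, d) a metric space over lexicographically ordered ℤ^{ω_μ}. If every open cover of X has a subcover of cardinality at most |ω_μ|, then X contains a dense subset of cardinality at most |ω_μ|, and hence has a basis of cardinality at most |ω_μ|. -/
open TopologicalSpace Cardinal

/-- The open ball of a `G`-valued metric. -/
def gball {X G : Type*} [LT G] (d : X → X → G) (x : X) (g : G) : Set X := {y | d x y < g}

/-- The topology induced by a `G`-valued metric: generated by all open balls of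
positive radius. -/
def gtop {X G : Type*} [AddCommGroup G] [LinearOrder G] [IsOrderedAddMonoid G] (d : X → X → G) : TopologicalSpace X :=
  .generateFrom {s | ∃ x g, 0 < g ∧ s = gball d x g}

/-! For every coordinate `l` the balls of radius `r^l` cover `X`, so at most `κ` of them
suffice; let `S l` be their centres. A positive element of lexicographic `ℤ^{ω_μ}` exceeds
`r^l + r^l` as soon as `l` lies beyond its first nonzero coordinate, so `⋃ l, S l` (of size at
most `κ · κ = κ`) is dense, and, as for separable metric spaces, the balls of radii `r^l` around
its points form a basis. -/

open Set

universe u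

lemma Cardinal.mk_iUnion_le_of_le {α ι : Type u} {κ : Cardinal.{u}} (hκ : ℵ₀ ≤ κ) (hι : #ι ≤ κ)
    {f : ι → Set α} (hf : ∀ i, #(f i) ≤ κ) : #(⋃ i, f i) ≤ κ :=
  (mk_iUnion_le f).trans (mul_le_of_le hκ hι (ciSup_le' hf))

lemma exists_mk_le_iUnion_eq_univ_of_subcover {X : Type u} [TopologicalSpace X]
    {κ : Cardinal.{u}}
    (hcov : ∀ C : Set (Set X), (∀ U ∈ C, IsOpen U) → ⋃₀ C = Set.univ →
      ∃ C' ⊆ C, #C' ≤ κ ∧ ⋃₀ C' = Set.univ)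
    (U : X → Set X) (hU : ∀ x, IsOpen (U x)) (hxU : ∀ x, x ∈ U x) :
    ∃ S : Set X, #S ≤ κ ∧ ⋃ x ∈ S, U x = Set.univ := by
  obtain ⟨C', hC'U, hC'κ, hC'cov⟩ := hcov (range U) (forall_mem_range.2 hU)
    (eq_univ_of_forall fun x => ⟨U x, mem_range_self x, hxU x⟩)
  choose f hf using fun c : C' => hC'U c.2
  refine ⟨range f, mk_range_le.trans hC'κ, eq_univ_of_forall fun x => ?_⟩
  obtain ⟨c, hc, hxc⟩ : x ∈ ⋃₀ C' := hC'cov ▸ mem_univ x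
  exact mem_iUnion₂.2 ⟨f ⟨c, hc⟩, mem_range_self _, (hf ⟨c, hc⟩).symm ▸ hxc⟩

section Lex

variable {ι R : Type*} [LinearOrder ι]

lemma unitVec_pos_s14 [PartialOrder R] [Zero R] [One R] [ZeroLEOneClass R] [NeZero (1 : R)] (l : ι) :
    (0 : Lex (ι → R)) < unitVec l :=
  ⟨l, fun j hj => (if_neg hj.ne).symm, show (0 : R) < if l = l then 1 else 0 by simp⟩

lemma exists_unitVec_add_unitVec_lt [NoMaxOrder ι] [AddZeroClass R] [One R] [LT R]
    {g : Lex (ι → R)} (hg : 0 < g) : ∃ l, (unitVec l + unitVec l : Lex (ι → R)) < g := by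
  obtain ⟨i, hi, hlt⟩ := hg
  obtain ⟨l, hil⟩ := exists_gt i
  refine ⟨l, i, fun j hj => ?_, ?_⟩
  · show (if j = l then 1 else 0) + (if j = l then 1 else 0) = g j
    rw [if_neg (hj.trans hil).ne, add_zero]
    exact hi j hj
  · show (if i = l then 1 else 0) + (if i = l then 1 else 0) < g i
    rw [if_neg hil.ne, add_zero]
    exact hlt

end Lex

lemma gball_subset_gball {X G : Type*} [Preorder G] {d : X → X → G} (x : X) {g h : G}
    (hgh : g ≤ h) : gball d x g ⊆ gball d x h :=
  fun _ hy => lt_of_lt_of_le hy hgh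

lemma isOpen_gball {X G : Type*} [AddCommGroup G] [LinearOrder G] [IsOrderedAddMonoid G]
    {d : X → X → G} [t : TopologicalSpace X] (ht : t = gtop d) (x : X) {g : G} (hg : 0 < g) :
    IsOpen (gball d x g) := by
  subst ht
  exact .basic _ ⟨x, g, hg, rfl⟩

namespace IsGMetric

variable {X G : Type*} [AddCommGroup G] [LinearOrder G] [IsOrderedAddMonoid G] {d : X → X → G}

lemma mem_gball_self (hd : IsGMetric d) (x : X) {g : G} (hg : 0 < g) : x ∈ gball d x g := by
  show d x x < g
  rwa [(hd.eq_zero_iff x x).2 rfl]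

lemma gball_subset_gball' (hd : IsGMetric d) {x y : X} {g h : G} (hgh : g + d y x ≤ h) :
    gball d x g ⊆ gball d y h := fun z hz =>
  calc d y z ≤ d y x + d x z := hd.triangle y z x
    _ < d y x + g := add_lt_add_right hz _
    _ ≤ h := by rwa [add_comm]

variable [t : TopologicalSpace X]

lemma exists_gball_subset_of_isOpen [Nontrivial G] (hd : IsGMetric d) (ht : t = gtop d)
    {u : Set X} (hu : IsOpen u) {x : X} (hx : x ∈ u) : ∃ g, 0 < g ∧ gball d x g ⊆ u := by
  subst ht
  induction hu generalizing x with
  | basic s hs =>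
    obtain ⟨a, g, -, rfl⟩ := hs
    exact ⟨g - d a x, sub_pos.2 hx, hd.gball_subset_gball' (sub_add_cancel g _).le⟩
  | univ =>
    obtain ⟨g, hg⟩ := exists_gt (0 : G)
    exact ⟨g, hg, subset_univ _⟩
  | inter s u _ _ ihs ihu =>
    obtain ⟨g, hg, hgs⟩ := ihs hx.1
    obtain ⟨h, hh, hhu⟩ := ihu hx.2
    exact ⟨min g h, lt_min hg hh,
      subset_inter ((gball_subset_gball x (min_le_left g h)).trans hgs)
        ((gball_subset_gball x (min_le_right g h)).trans hhu)⟩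
  | sUnion S _ ih =>
    obtain ⟨s, hs, hxs⟩ := hx
    obtain ⟨g, hg, hgs⟩ := ih s hs hxs
    exact ⟨g, hg, hgs.trans (subset_sUnion_of_mem hs)⟩

lemma dense_iff [Nontrivial G] (hd : IsGMetric d) (ht : t = gtop d) {A : Set X} :
    Dense A ↔ ∀ x g, 0 < g → ∃ a ∈ A, d x a < g := by
  rw [dense_iff_inter_open]
  constructor
  · intro h x g hg
    obtain ⟨a, hxa, haA⟩ := h _ (isOpen_gball ht x hg) ⟨x, hd.mem_gball_self x hg⟩
    exact ⟨a, haA, hxa⟩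
  · rintro h u hu ⟨x, hx⟩
    obtain ⟨g, hg, hgu⟩ := hd.exists_gball_subset_of_isOpen ht hu hx
    obtain ⟨a, haA, hxa⟩ := h x g hg
    exact ⟨a, hgu hxa, haA⟩

lemma dense_iUnion_of_iUnion_gball_eq_univ [Nontrivial G] (hd : IsGMetric d) (ht : t = gtop d)
    {ι : Type*} {r : ι → G} (hr : ∀ g, 0 < g → ∃ l, r l < g) {S : ι → Set X}
    (hS : ∀ l, ⋃ a ∈ S l, gball d a (r l) = Set.univ) : Dense (⋃ l, S l) := by
  refine (hd.dense_iff ht).2 fun x g hg => ?_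
  obtain ⟨l, hl⟩ := hr g hg
  have hx : x ∈ ⋃ a ∈ S l, gball d a (r l) := (hS l).symm ▸ mem_univ x
  obtain ⟨a, haS, hax⟩ := mem_iUnion₂.1 hx
  exact ⟨a, mem_iUnion.2 ⟨l, haS⟩, (hd.symm x a).trans_lt (hax.trans hl)⟩

lemma isTopologicalBasis_range_gball [Nontrivial G] (hd : IsGMetric d) (ht : t = gtop d)
    {ι : Type*} {r : ι → G} (hr0 : ∀ l, 0 < r l) (hr : ∀ g, 0 < g → ∃ l, r l + r l < g)
    {A : Set X} (hA : Dense A) :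
    IsTopologicalBasis (range fun p : A × ι => gball d p.1 (r p.2)) := by
  refine isTopologicalBasis_of_isOpen_of_nhds ?_ fun x u hxu hu => ?_
  · rintro _ ⟨⟨a, l⟩, rfl⟩
    exact isOpen_gball ht a (hr0 l)
  obtain ⟨g, hg, hgu⟩ := hd.exists_gball_subset_of_isOpen ht hu hxu
  obtain ⟨l, hl⟩ := hr g hg
  obtain ⟨a, haA, hxa⟩ := (hd.dense_iff ht).1 hA x (r l) (hr0 l)
  refine ⟨_, ⟨(⟨a, haA⟩, l), rfl⟩, (hd.symm a x).trans_lt hxa,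
    (hd.gball_subset_gball' ?_).trans hgu⟩
  exact (add_lt_add_right hxa _).le.trans hl.le

end IsGMetric

/-- If in a space metrized over lexicographic `ℤ^{ω_μ}` (`ω_μ = κ.ord`, `κ`
regular) every open cover has a subcover of cardinality at most `κ = |ω_μ|`, then the
space has a dense subset of cardinality at most `κ`, and hence a basis of cardinality at
most `κ`. -/
theorem stmt14 {X : Type*} (κ : Cardinal) (hκ : κ.IsRegular)
    (d : X → X → Lex (κ.ord.ToType → ℤ)) (hd : IsGMetric d)
    [tX : TopologicalSpace X] (htop : tX = gtop d)
    (hcov : ∀ C : Set (Set X), (∀ U ∈ C, IsOpen U) → ⋃₀ C = Set.univ →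
      ∃ C' ⊆ C, #C' ≤ κ ∧ ⋃₀ C' = Set.univ) :
    (∃ A : Set X, Dense A ∧ #A ≤ κ) ∧
    ∃ B : Set (Set X), IsTopologicalBasis B ∧ #B ≤ κ := by
  have hκ₀ : ℵ₀ ≤ κ := hκ.aleph0_le
  have : NoMaxOrder κ.ord.ToType := Cardinal.noMaxOrder hκ₀
  have : Nonempty κ.ord.ToType := mk_ne_zero_iff.1 ((mk_ord_toType κ).trans_ne hκ.pos.ne')
  have hr0 (l : κ.ord.ToType) : (0 : Lex (κ.ord.ToType → ℤ)) < unitVec l := unitVec_pos_s14 l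
  choose S hSκ hScov using fun l => exists_mk_le_iUnion_eq_univ_of_subcover hcov _
    (fun a => isOpen_gball htop a (hr0 l)) (fun a => hd.mem_gball_self a (hr0 l))
  have hA : Dense (⋃ l, S l) := hd.dense_iUnion_of_iUnion_gball_eq_univ htop
    (fun g hg => (exists_unitVec_add_unitVec_lt hg).imp fun l hl =>
      (lt_add_of_pos_left _ (hr0 l)).trans hl) hScov
  have hAκ : #(⋃ l, S l) ≤ κ := mk_iUnion_le_of_le hκ₀ (mk_ord_toType κ).le hSκ
  refine ⟨⟨_, hA, hAκ⟩, _, hd.isTopologicalBasis_range_gball htop hr0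
    (fun _ => exists_unitVec_add_unitVec_lt) hA, ?_⟩
  calc #(range _) ≤ #((⋃ l, S l) × κ.ord.ToType) := mk_range_le
    _ ≤ κ := by
      rw [mk_prod, lift_id, lift_id]
      exact mul_le_of_le hκ₀ hAκ (mk_ord_toType κ).le
end

section
/- Let ω_μ be an uncountable regular ordinal and let X be a T1 and regular (T3) topological space that is ω_μ-additive (intersections of fewer than |ω_μ| open sets are open) and has a basis of cardinality at most |ω_μ|. Then X can be topologically embedded in the generalized Hilbert cube Q_μ = {0,1}^{ω_μ} equipped with the topology whose basic open sets fix an initial segment of coordinates: { y : y_λ = x_λ for all λ < ν }, ν ∈ ω_μ. -/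
/-!
As `ω_μ` is uncountable, countable intersections of open sets are open. So for `x ∈ U` and a
regular shrinking `U = U₀ ⊇ closure U₁ ⊇ U₁ ⊇ closure U₂ ⊇ ⋯` around `x`, the intersection
`⋂ Uₙ` is a clopen neighbourhood of `x` inside `U`: clopen sets form a basis. A clopen set
squeezed between two members of the given basis can be chosen for each such pair, giving a clopen
basis `(A i)_{i < ω_μ}`. Then `x ↦ (x ∈ A i)_i` is the embedding: the preimage of the cylinder
fixing the coordinates below `ν` is an intersection of fewer than `|ω_μ|` clopen sets, hence open
by additivity, and the cylinder through `x` fixing coordinate `i` pulls back into `A i`.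
-/

open TopologicalSpace Cardinal Set Topology Function

universe u

/-- The topology of `Q_μ`. -/
abbrev prefixTopology (ι : Type*) [LT ι] : TopologicalSpace (ι → Bool) :=
  .generateFrom {s | ∃ (x : ι → Bool) (ν : ι), s = {y | ∀ l < ν, y l = x l}}

theorem RegularSpace.isTopologicalBasis_isClopen {X : Type*} [TopologicalSpace X]
    [RegularSpace X] (hX : ∀ U : ℕ → Set X, (∀ n, IsOpen (U n)) → IsOpen (⋂ n, U n)) :
    IsTopologicalBasis {s : Set X | IsClopen s} := by
  refine isTopologicalBasis_of_isOpen_of_nhds (fun s hs => hs.isOpen) fun x U hxU hU => ?_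
  have shrink : ∀ V : Set X, IsOpen V → x ∈ V → ∃ W, IsOpen W ∧ x ∈ W ∧ closure W ⊆ V :=
    fun V hV hxV => by
      obtain ⟨W, ⟨hxW, hW⟩, hWV⟩ := (hasBasis_opens_closure x).mem_iff.mp (hV.mem_nhds hxV)
      exact ⟨W, hW, hxW, hWV⟩
  choose! W hWo hxW hWV using shrink
  set V : ℕ → Set X := fun n => W^[n] U
  have hV : ∀ n, IsOpen (V n) ∧ x ∈ V n := by
    intro n
    induction n with
    | zero => exact ⟨hU, hxU⟩
    | succ n ih => simpa only [V, iterate_succ_apply'] using ⟨hWo _ ih.1 ih.2, hxW _ ih.1 ih.2⟩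
  have hVclosure : ∀ n, closure (V (n + 1)) ⊆ V n := fun n => by
    simpa only [V, iterate_succ_apply'] using hWV _ (hV n).1 (hV n).2
  have hclosed : ⋂ n, V n = ⋂ n, closure (V (n + 1)) :=
    (iInter_mono' fun n => ⟨n + 1, subset_closure⟩).antisymm (iInter_mono hVclosure)
  refine ⟨⋂ n, V n, ⟨?_, hX V fun n => (hV n).1⟩, mem_iInter.2 fun n => (hV n).2,
    iInter_subset V 0⟩
  rw [hclosed]
  exact isClosed_iInter fun n => isClosed_closure

theorem TopologicalSpace.IsTopologicalBasis.exists_subset_isTopologicalBasis_mk_le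
    {X : Type u} [TopologicalSpace X] {B C : Set (Set X)} (hB : IsTopologicalBasis B)
    (hC : IsTopologicalBasis C) : ∃ A ⊆ C, IsTopologicalBasis A ∧ #A ≤ #B * #B := by
  set P : Set (B × B) := {p | ∃ c ∈ C, (p.1 : Set X) ⊆ c ∧ c ⊆ p.2}
  choose g hgC hg using fun p : P => p.2
  refine ⟨range g, range_subset_iff.2 hgC, ?_, ?_⟩
  · refine isTopologicalBasis_of_isOpen_of_nhds ?_ fun x U hxU hU => ?_
    · rintro _ ⟨p, rfl⟩
      exact hC.isOpen (hgC p)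
    obtain ⟨W, hWB, hxW, hWU⟩ := hB.exists_subset_of_mem_open hxU hU
    obtain ⟨c, hcC, hxc, hcW⟩ := hC.exists_subset_of_mem_open hxW (hB.isOpen hWB)
    obtain ⟨V, hVB, hxV, hVc⟩ := hB.exists_subset_of_mem_open hxc (hC.isOpen hcC)
    let p : P := ⟨(⟨V, hVB⟩, ⟨W, hWB⟩), c, hcC, hVc, hcW⟩
    exact ⟨g p, mem_range_self p, (hg p).1 hxV, (hg p).2.trans hWU⟩
  · calc #(range g) ≤ #P := mk_range_le
      _ ≤ #(B × B) := mk_set_le P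
      _ = #B * #B := by rw [mk_prod, lift_id]

theorem exists_range_eq_of_mk_le {α ι : Type u} {s : Set α} (hs : s.Nonempty) (h : #s ≤ #ι) :
    ∃ f : ι → α, range f = s := by
  have : Nonempty s := hs.to_subtype
  obtain ⟨g, hg⟩ := exists_surjective_iff.2 ⟨inferInstance, (le_def _ _).1 h⟩
  exact ⟨Subtype.val ∘ g, by rw [hg.range_comp, Subtype.range_coe]⟩

theorem isInducing_boolIndicator {X ι : Type*} [tX : TopologicalSpace X] [LT ι] [NoMaxOrder ι]
    {A : ι → Set X} (hA : IsTopologicalBasis (range A)) (hclopen : ∀ i, IsClopen (A i))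
    (hinter : ∀ (ν : ι) (V : ι → Set X), (∀ l, IsOpen (V l)) → IsOpen (⋂ l < ν, V l)) :
    @IsInducing X (ι → Bool) tX (prefixTopology ι) fun x i => (A i).boolIndicator x := by
  refine @IsInducing.mk _ _ tX (prefixTopology ι) _ ?_
  rw [prefixTopology, induced_generateFrom_eq]
  refine IsTopologicalBasis.eq_generateFrom (isTopologicalBasis_of_isOpen_of_nhds ?_ ?_)
  · rintro _ ⟨_, ⟨c, ν, rfl⟩, rfl⟩
    have hpre : (fun x i => (A i).boolIndicator x) ⁻¹' {y | ∀ l < ν, y l = c l} =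
        ⋂ l < ν, (A l).boolIndicator ⁻¹' {c l} := by
      ext x
      simp only [mem_preimage, mem_ofPred_eq, mem_iInter, mem_singleton_iff]
    rw [hpre]
    exact hinter ν (fun l => (A l).boolIndicator ⁻¹' {c l}) fun l =>
      ((continuous_boolIndicator_iff_isClopen _).2 (hclopen l)).isOpen_preimage _
        (isOpen_discrete _)
  · intro x U hxU hU
    obtain ⟨_, ⟨i, rfl⟩, hxi, hiU⟩ := hA.exists_subset_of_mem_open hxU hU
    obtain ⟨ν, hiν⟩ := exists_gt i
    refine ⟨_, ⟨_, ⟨fun i => (A i).boolIndicator x, ν, rfl⟩, rfl⟩, fun l _ => rfl,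
      fun y hy => hiU ?_⟩
    rw [mem_iff_boolIndicator] at hxi ⊢
    exact (hy i hiν).trans hxi

theorem stmt18_general {X : Type*} [tX : TopologicalSpace X] [T1Space X] [RegularSpace X]
    (κ : Cardinal) (hu : Cardinal.aleph0 < κ)
    (hadd : ∀ S : Set (Set X), #S < κ → (∀ U ∈ S, IsOpen U) → IsOpen (⋂₀ S))
    (B : Set (Set X)) (hB : IsTopologicalBasis B) (hBcard : #B ≤ κ) :
    ∃ f : X → (κ.ord.ToType → Bool),
      @Topology.IsEmbedding X (κ.ord.ToType → Bool) tX
        (.generateFrom {s : Set (κ.ord.ToType → Bool) |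
          ∃ (x : κ.ord.ToType → Bool) (ν : κ.ord.ToType), s = {y | ∀ l < ν, y l = x l}})
        f := by
  have hclopen := RegularSpace.isTopologicalBasis_isClopen fun U hU => by
    rw [← sInter_range]
    exact hadd _ ((countable_range U).le_aleph0.trans_lt hu) (forall_mem_range.2 hU)
  obtain ⟨𝒜, h𝒜C, h𝒜, h𝒜card⟩ := hB.exists_subset_isTopologicalBasis_mk_le hclopen
  have hcard : #(insert ∅ 𝒜 : Set (Set X)) ≤ #κ.ord.ToType := by
    rw [mk_ord_toType]
    exact mk_insert_le.trans <| add_le_of_le hu.le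
      (h𝒜card.trans (mul_le_of_le hu.le hBcard hBcard)) (one_le_aleph0.trans hu.le)
  obtain ⟨A, hA⟩ := exists_range_eq_of_mk_le (insert_nonempty _ _) hcard
  have hAclopen : ∀ i, IsClopen (A i) := fun i => by
    rcases (hA ▸ mem_range_self i : A i ∈ insert ∅ 𝒜) with h | h
    · exact h ▸ isClopen_empty
    · exact h𝒜C h
  have : NoMaxOrder κ.ord.ToType := noMaxOrder hu.le
  refine ⟨_, @IsInducing.isEmbedding X _ tX (prefixTopology _) _ _
    (isInducing_boolIndicator (hA ▸ h𝒜.insert_empty) hAclopen fun ν V hV => ?_)⟩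
  simpa only [sInter_image, mem_Iio] using hadd (V '' Iio ν)
    (mk_image_le.trans_lt (by simpa using mk_Iio_lt ν)) (forall_mem_image.2 fun l _ => hV l)

/-- An uncountable-regular-ordinal version of the embedding theorem: a T1,
regular space which is `ω_μ`-additive (`ω_μ = κ.ord`, `κ` a regular uncountable
cardinal) and has a basis of cardinality at most `κ = |ω_μ|` embeds in the generalized
Hilbert cube `Q_μ = {0,1}^{ω_μ}` carrying the topology generated by the sets fixing all
coordinates below some `ν`. -/
theorem stmt18 {X : Type*} [tX : TopologicalSpace X] [T1Space X] [RegularSpace X]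
    (κ : Cardinal) (hκ : κ.IsRegular) (hu : Cardinal.aleph0 < κ)
    (hadd : ∀ S : Set (Set X), #S < κ → (∀ U ∈ S, IsOpen U) → IsOpen (⋂₀ S))
    (B : Set (Set X)) (hB : IsTopologicalBasis B) (hBcard : #B ≤ κ) :
    ∃ f : X → (κ.ord.ToType → Bool),
      @Topology.IsEmbedding X (κ.ord.ToType → Bool) tX
        (.generateFrom {s : Set (κ.ord.ToType → Bool) |
          ∃ (x : κ.ord.ToType → Bool) (ν : κ.ord.ToType), s = {y | ∀ l < ν, y l = x l}})
        f :=
  stmt18_general (tX := tX) κ hu hadd B hB hBcard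
end
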